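/- arXiv:2407.12924 — 8 statements merged into one kernel-verified Lean document; each statement's English description precedes it below -/
import Mathlib

section
/- For any σ > 1, the function ρ₁(s_A, s_B) = 1/((σ/(σ-1) - s_A)(σ/(σ-1) - s_B)) is convex on the convex set [0,1] × [0,1]; i.e., for any x, y ∈ [0,1]² and t ∈ [0,1], ρ₁(t·x + (1-t)·y) ≤ t·ρ₁(x) + (1-t)·ρ₁(y). -/
/-!
On the open positive quadrant, `1 / (u * v) = exp (-log u - log v)` is the exponential of a
convex function, hence convex. The CES factor is this function composed with the affine map
`p ↦ (c - p.1, c - p.2)`, `c = σ / (σ - 1) > 1`, which sends `[0, 1]²` into the quadrant.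
-/

open Real Set

theorem ConvexOn.exp {E : Type*} [AddCommGroup E] [Module ℝ E] {s : Set E} {f : E → ℝ}
    (hf : ConvexOn ℝ s f) : ConvexOn ℝ s fun x => Real.exp (f x) := by
  refine ⟨hf.1, fun x hx y hy a b ha hb hab => ?_⟩
  calc Real.exp (f (a • x + b • y))
      ≤ Real.exp (a • f x + b • f y) := Real.exp_le_exp.2 (hf.2 hx hy ha hb hab)
    _ ≤ a • Real.exp (f x) + b • Real.exp (f y) :=
        convexOn_exp.2 (mem_univ _) (mem_univ _) ha hb hab

theorem convexOn_one_div_fst_mul_snd :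
    ConvexOn ℝ (Ioi 0 ×ˢ Ioi 0) fun p : ℝ × ℝ => 1 / (p.1 * p.2) := by
  have hneg_log : ConvexOn ℝ (Ioi 0) fun u : ℝ => -Real.log u :=
    strictConcaveOn_log_Ioi.concaveOn.neg
  have hquadrant : Convex ℝ (Ioi (0 : ℝ) ×ˢ Ioi (0 : ℝ)) := (convex_Ioi 0).prod (convex_Ioi 0)
  have hsum : ConvexOn ℝ (Ioi 0 ×ˢ Ioi 0) fun p : ℝ × ℝ => -Real.log p.1 + -Real.log p.2 :=
    ((hneg_log.comp_linearMap (LinearMap.fst ℝ ℝ ℝ)).subset (fun p hp => hp.1) hquadrant).add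
      ((hneg_log.comp_linearMap (LinearMap.snd ℝ ℝ ℝ)).subset (fun p hp => hp.2) hquadrant)
  refine hsum.exp.congr fun p ⟨(hp₁ : 0 < p.1), (hp₂ : 0 < p.2)⟩ => ?_
  dsimp only
  rw [← neg_add, ← Real.log_mul hp₁.ne' hp₂.ne', Real.exp_neg,
    Real.exp_log (mul_pos hp₁ hp₂), one_div]

/-- CES cross-firm scaling factor ρ₁ is convex on [0,1] × [0,1], for σ > 1. -/
theorem rho1_CES_convexOn (σ : ℝ) (hσ : 1 < σ) :
    ConvexOn ℝ (Set.Icc (0 : ℝ) 1 ×ˢ Set.Icc (0 : ℝ) 1)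
      (fun p : ℝ × ℝ => 1 / ((σ / (σ - 1) - p.1) * (σ / (σ - 1) - p.2))) := by
  set c := σ / (σ - 1)
  have hc : 1 < c := by rw [lt_div_iff₀ (by linarith)]; linarith
  let reflect : ℝ × ℝ →ᵃ[ℝ] ℝ × ℝ := AffineMap.const ℝ (ℝ × ℝ) (c, c) - AffineMap.id ℝ (ℝ × ℝ)
  have hmaps : Icc (0 : ℝ) 1 ×ˢ Icc (0 : ℝ) 1 ⊆ reflect ⁻¹' (Ioi 0 ×ˢ Ioi 0) :=
    fun p ⟨⟨_, hp₁⟩, ⟨_, hp₂⟩⟩ => ⟨show 0 < c - p.1 by linarith, show 0 < c - p.2 by linarith⟩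
  exact (convexOn_one_div_fst_mul_snd.comp_affineMap reflect).subset hmaps
    ((convex_Icc 0 1).prod (convex_Icc 0 1))
end

section
/- Fix a level of the change in HHI, ΔHHI = Δ₀ = 2c with 0 < c < 1, and parametrize pairs of merging shares with product s_A·s_B = c by s_A = s and s_B = c/s. Then the function s ↦ 1/((1 - s)(1 - c/s)) is strictly increasing on the interval (√c, 1); that is, along the level curve 2·s_A·s_B = Δ₀, ρ₁^MNL(s_A, s_B) = 1/((1 - s_A)(1 - s_B)) strictly increases as the shares become more asymmetric (as the larger share s increases above √c). -/
/-- Along the ΔHHI level curve s_A · s_B = c, the MNL scaling factor ρ₁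
strictly increases in the asymmetry of the shares: the map
s ↦ 1/((1 - s)(1 - c/s)) is strictly increasing on (√c, 1). -/
theorem rho1_MNL_increasing_in_asymmetry (c : ℝ) (hc0 : 0 < c) (hc1 : c < 1) :
    StrictMonoOn (fun s : ℝ => 1 / ((1 - s) * (1 - c / s)))
      (Set.Ioo (Real.sqrt c) 1) := by
  intro x hx y hy hxy
  have hs : 0 < Real.sqrt c := Real.sqrt_pos.mpr hc0
  have hx0 : 0 < x := hs.trans hx.1
  have hy0 : 0 < y := hs.trans hy.1
  have hcs : Real.sqrt c * Real.sqrt c = c := Real.mul_self_sqrt hc0.le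
  have hcx : c < x * x := by nlinarith [hx.1]
  have hcy : c < y * y := by nlinarith [hy.1]
  have hcxy : c < x * y := by nlinarith [hx.1, hy.1]
  have hdx : 0 < (1 - x) * (1 - c / x) := by
    have h1 : c / x < 1 := (div_lt_one hx0).mpr (by nlinarith [hx.2])
    have h2 : (0:ℝ) < 1 - x := by linarith [hx.2]
    nlinarith
  have hdy : 0 < (1 - y) * (1 - c / y) := by
    have h1 : c / y < 1 := (div_lt_one hy0).mpr (by nlinarith [hy.2])
    have h2 : (0:ℝ) < 1 - y := by linarith [hy.2]
    nlinarith
  have hlt : (1 - y) * (1 - c / y) < (1 - x) * (1 - c / x) := by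
    rw [show (1 : ℝ) - c / x = (x - c) / x by field_simp,
        show (1 : ℝ) - c / y = (y - c) / y by field_simp,
        ← mul_div_assoc, ← mul_div_assoc, div_lt_div_iff₀ hy0 hx0]
    nlinarith [mul_pos (sub_pos.mpr hxy) (sub_pos.mpr hcxy), hx.2, hy.2]
  simpa using one_div_lt_one_div_of_lt hdy hlt
end

section
/- Fix σ > 1, let κ = σ/(σ-1), and fix a level of the change in revenue-based HHI, ΔHHI^R = Δ₀ = 2c with 0 < c < 1. Parametrize pairs of merging revenue shares with product s_A·s_B = c by s_A = s and s_B = c/s. Then the function s ↦ 1/((κ - s)(κ - c/s)) is strictly increasing on the interval (√c, 1]; that is, along the level curve 2·s_A·s_B = Δ₀, ρ₁^CES(s_A, s_B) = 1/((κ - s_A)(κ - s_B)) strictly increases as the shares become more asymmetric. -/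
/-- Along the revenue-based ΔHHI level curve s_A · s_B = c, the CES scaling
factor ρ₁ strictly increases in the asymmetry of the shares: with
κ = σ/(σ-1), the map s ↦ 1/((κ - s)(κ - c/s)) is strictly increasing on
(√c, 1]. -/
theorem rho1_CES_increasing_in_asymmetry (σ : ℝ) (hσ : 1 < σ)
    (c : ℝ) (hc0 : 0 < c) (hc1 : c < 1) :
    StrictMonoOn (fun s : ℝ => 1 / ((σ / (σ - 1) - s) * (σ / (σ - 1) - c / s)))
      (Set.Ioc (Real.sqrt c) 1) := by
  rintro s ⟨hs1, hs2⟩ t ⟨ht1, ht2⟩ hst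
  have hrc : 0 < Real.sqrt c := Real.sqrt_pos.mpr hc0
  have hs0 : 0 < s := lt_trans hrc hs1
  have ht0 : 0 < t := lt_trans hrc ht1
  set κ := σ / (σ - 1) with hκdef
  have hκ : 1 < κ := by
    rw [hκdef, lt_div_iff₀ (by linarith)]; linarith
  have hrc1 : Real.sqrt c < 1 := by
    have := Real.sqrt_lt_sqrt hc0.le hc1
    simpa using this
  have hcc : Real.sqrt c * Real.sqrt c = c := Real.mul_self_sqrt hc0.le
  have hcs : c / s < Real.sqrt c := by
    rw [div_lt_iff₀ hs0]
    nlinarith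
  have hct : c / t < Real.sqrt c := by
    rw [div_lt_iff₀ ht0]
    nlinarith
  have hstc : c < s * t := by nlinarith
  have key : s + c / s < t + c / t := by
    rw [← sub_pos]
    have e : t + c / t - (s + c / s) = (t - s) * (s * t - c) / (s * t) := by
      field_simp; ring
    rw [e]
    exact div_pos (mul_pos (sub_pos.mpr hst) (sub_pos.mpr hstc)) (mul_pos hs0 ht0)
  have hDt : 0 < (κ - t) * (κ - c / t) := by
    apply mul_pos <;> linarith
  have hDlt : (κ - t) * (κ - c / t) < (κ - s) * (κ - c / s) := by
    have e1 : s * (c / s) = c := mul_div_cancel₀ c hs0.ne'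
    have e2 : t * (c / t) = c := mul_div_cancel₀ c ht0.ne'
    nlinarith
  simpa using one_div_lt_one_div_of_lt hDt hDlt
end

section
/- Let 0 < Δ₀ and 0 < c₀ < 1 with c₀²/2 ≥ Δ₀, and let S(c₀, Δ₀) = {(s_A, s_B) ∈ ℝ² : s_A > 0, s_B > 0, s_A + s_B ≤ c₀, 2·s_A·s_B = Δ₀}. Then for every (s_A, s_B) ∈ S(c₀, Δ₀), 1/((1 - s_A)(1 - s_B)) ≥ 1/(1 - √(Δ₀/2))², and this lower bound is attained at the symmetric point s_A = s_B = √(Δ₀/2), which belongs to S(c₀, Δ₀). -/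
/-- Lower bound of ρ₁^MNL on the feasible set S(c₀, Δ₀): it is bounded below by
1/(1 - √(Δ₀/2))², and this bound is attained at the symmetric point
s_A = s_B = √(Δ₀/2), which belongs to S(c₀, Δ₀). -/
theorem rho1_MNL_lower_bound (c₀ Δ₀ : ℝ) (hΔ : 0 < Δ₀) (hc0 : 0 < c₀)
    (hc1 : c₀ < 1) (hfeas : c₀ ^ 2 / 2 ≥ Δ₀) :
    (∀ sA sB : ℝ, 0 < sA → 0 < sB → sA + sB ≤ c₀ → 2 * sA * sB = Δ₀ →
      1 / ((1 - sA) * (1 - sB)) ≥ 1 / (1 - Real.sqrt (Δ₀ / 2)) ^ 2) ∧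
    (0 < Real.sqrt (Δ₀ / 2) ∧ Real.sqrt (Δ₀ / 2) + Real.sqrt (Δ₀ / 2) ≤ c₀ ∧
      2 * Real.sqrt (Δ₀ / 2) * Real.sqrt (Δ₀ / 2) = Δ₀) ∧
    1 / ((1 - Real.sqrt (Δ₀ / 2)) * (1 - Real.sqrt (Δ₀ / 2))) =
      1 / (1 - Real.sqrt (Δ₀ / 2)) ^ 2 := by
  set r := Real.sqrt (Δ₀ / 2) with hr
  have hΔ2 : (0:ℝ) < Δ₀ / 2 := by linarith
  have hrpos : 0 < r := Real.sqrt_pos.mpr hΔ2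
  have hrsq : r ^ 2 = Δ₀ / 2 := Real.sq_sqrt hΔ2.le
  have hrle : r ≤ c₀ / 2 := by
    have h1 : Δ₀ / 2 ≤ (c₀ / 2) ^ 2 := by nlinarith
    calc r ≤ Real.sqrt ((c₀ / 2) ^ 2) := Real.sqrt_le_sqrt h1
      _ = c₀ / 2 := by
        rw [Real.sqrt_sq (by linarith)]
  have hrlt1 : r < 1 := by linarith
  have hbpos : (0:ℝ) < (1 - r) ^ 2 := by nlinarith
  refine ⟨?_, ⟨hrpos, by linarith, by nlinarith⟩, by ring⟩
  intro sA sB hA hB hsum hprod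
  have hA1 : sA < 1 := by linarith
  have hB1 : sB < 1 := by linarith
  have hxpos : 0 < (1 - sA) * (1 - sB) := by nlinarith
  have hamgm : sA + sB ≥ 2 * r := by nlinarith [sq_nonneg (sA - sB), sq_nonneg (sA + sB - 2 * r)]
  have hle : (1 - sA) * (1 - sB) ≤ (1 - r) ^ 2 := by nlinarith
  exact one_div_le_one_div_of_le hxpos hle
end

section
/- Let 0 < Δ₀ and 0 < c₀ < 1 with c₀²/2 ≥ Δ₀, and let S(c₀, Δ₀) = {(s_A, s_B) ∈ ℝ² : s_A > 0, s_B > 0, s_A + s_B ≤ c₀, 2·s_A·s_B = Δ₀}. Then for every (s_A, s_B) ∈ S(c₀, Δ₀), 1/((1 - s_A)(1 - s_B)) ≤ 2/(Δ₀ - 2c₀ + 2), and this upper bound is attained at the point s_A = (c₀ - √(c₀² - 2Δ₀))/2, s_B = (c₀ + √(c₀² - 2Δ₀))/2, which belongs to S(c₀, Δ₀). -/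
/-- Upper bound of ρ₁^MNL on the feasible set S(c₀, Δ₀): it is bounded above by
2/(Δ₀ - 2c₀ + 2), and this bound is attained at the point
s_A = (c₀ - √(c₀² - 2Δ₀))/2, s_B = (c₀ + √(c₀² - 2Δ₀))/2, which belongs to
S(c₀, Δ₀). -/
theorem rho1_MNL_upper_bound (c₀ Δ₀ : ℝ) (hΔ : 0 < Δ₀) (hc0 : 0 < c₀)
    (hc1 : c₀ < 1) (hfeas : c₀ ^ 2 / 2 ≥ Δ₀) :
    (∀ sA sB : ℝ, 0 < sA → 0 < sB → sA + sB ≤ c₀ → 2 * sA * sB = Δ₀ →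
      1 / ((1 - sA) * (1 - sB)) ≤ 2 / (Δ₀ - 2 * c₀ + 2)) ∧
    (let sA := (c₀ - Real.sqrt (c₀ ^ 2 - 2 * Δ₀)) / 2
     let sB := (c₀ + Real.sqrt (c₀ ^ 2 - 2 * Δ₀)) / 2
     (0 < sA ∧ 0 < sB ∧ sA + sB ≤ c₀ ∧ 2 * sA * sB = Δ₀) ∧
       1 / ((1 - sA) * (1 - sB)) = 2 / (Δ₀ - 2 * c₀ + 2)) := by
  have hd : 0 < Δ₀ - 2 * c₀ + 2 := by nlinarith
  constructor
  · intro sA sB hA hB hsum hΔ0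
    have hA1 : sA < 1 := by nlinarith
    have hB1 : sB < 1 := by nlinarith
    have hp : 0 < (1 - sA) * (1 - sB) := by nlinarith
    rw [div_le_div_iff₀ hp hd]
    nlinarith
  · have hnn : (0:ℝ) ≤ c₀ ^ 2 - 2 * Δ₀ := by linarith
    have hsq : Real.sqrt (c₀ ^ 2 - 2 * Δ₀) ^ 2 = c₀ ^ 2 - 2 * Δ₀ :=
      Real.sq_sqrt hnn
    have hs0 : 0 ≤ Real.sqrt (c₀ ^ 2 - 2 * Δ₀) := Real.sqrt_nonneg _
    have hlt : Real.sqrt (c₀ ^ 2 - 2 * Δ₀) < c₀ := by nlinarith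
    refine ⟨⟨by linarith, by linarith, by ring_nf; linarith, by nlinarith⟩, ?_⟩
    have hA1 : (c₀ - Real.sqrt (c₀ ^ 2 - 2 * Δ₀)) / 2 < 1 := by nlinarith
    have hB1 : (c₀ + Real.sqrt (c₀ ^ 2 - 2 * Δ₀)) / 2 < 1 := by nlinarith
    have hp : 0 < (1 - (c₀ - Real.sqrt (c₀ ^ 2 - 2 * Δ₀)) / 2) *
        (1 - (c₀ + Real.sqrt (c₀ ^ 2 - 2 * Δ₀)) / 2) := by nlinarith
    rw [div_eq_div_iff hp.ne' hd.ne']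
    nlinarith
end

section
/- Let κ > 1, let n ≥ 1, and let λ₁, …, λ_n ∈ (0, 1] with λ₁ + ⋯ + λ_n = 1. Define g(s) = Σ_{j=1}^n λ_j·(κ - s)/(κ - λ_j·s) for s ∈ (0, 1). Then g is nonincreasing on (0, 1); moreover, if λ_j < 1 for some j (equivalently, n ≥ 2), then g is strictly decreasing on (0, 1). -/
lemma ces_term_le (κ : ℝ) (hκ : 1 < κ) (l : ℝ) (hl : l ∈ Set.Ioc (0:ℝ) 1)
    {s t : ℝ} (hs : s ∈ Set.Ioo (0:ℝ) 1) (ht : t ∈ Set.Ioo (0:ℝ) 1) (hst : s ≤ t) :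
    l * (κ - t) / (κ - l * t) ≤ l * (κ - s) / (κ - l * s) := by
  obtain ⟨hl0, hl1⟩ := hl
  obtain ⟨hs0, hs1⟩ := hs
  obtain ⟨ht0, ht1⟩ := ht
  have hds : 0 < κ - l * s := by nlinarith
  have hdt : 0 < κ - l * t := by nlinarith
  rw [div_le_div_iff₀ hdt hds]
  nlinarith [mul_nonneg (mul_nonneg hl0.le (sub_nonneg.2 hκ.le)) (sub_nonneg.2 hst),
    mul_nonneg (sub_nonneg.2 hl1) (sub_nonneg.2 hst)]

lemma ces_term_lt (κ : ℝ) (hκ : 1 < κ) (l : ℝ) (hl : l ∈ Set.Ioc (0:ℝ) 1) (hl1' : l < 1)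
    {s t : ℝ} (hs : s ∈ Set.Ioo (0:ℝ) 1) (ht : t ∈ Set.Ioo (0:ℝ) 1) (hst : s < t) :
    l * (κ - t) / (κ - l * t) < l * (κ - s) / (κ - l * s) := by
  obtain ⟨hl0, hl1⟩ := hl
  obtain ⟨hs0, hs1⟩ := hs
  obtain ⟨ht0, ht1⟩ := ht
  have hds : 0 < κ - l * s := by nlinarith
  have hdt : 0 < κ - l * t := by nlinarith
  rw [div_lt_div_iff₀ hdt hds]
  nlinarith [mul_pos (mul_pos hl0 (sub_pos.2 hκ)) (sub_pos.2 hst),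
    mul_pos (sub_pos.2 hl1') (sub_pos.2 hst)]

/-- CES within-firm scaling factor contribution
g(s) = Σ_j λ_j (κ-s)/(κ - λ_j s), κ > 1, is nonincreasing on (0,1), and
strictly decreasing if some λ_j < 1. -/
theorem rho2_CES_decreasing_in_share (κ : ℝ) (hκ : 1 < κ) (n : ℕ) (hn : 1 ≤ n)
    (lam : Fin n → ℝ) (hlam : ∀ j, lam j ∈ Set.Ioc (0 : ℝ) 1)
    (hsum : ∑ j, lam j = 1) :
    AntitoneOn (fun s : ℝ => ∑ j, lam j * (κ - s) / (κ - lam j * s))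
      (Set.Ioo (0 : ℝ) 1) ∧
    ((∃ j, lam j < 1) →
      StrictAntiOn (fun s : ℝ => ∑ j, lam j * (κ - s) / (κ - lam j * s))
        (Set.Ioo (0 : ℝ) 1)) := by
  constructor
  · intro s hs t ht hst
    exact Finset.sum_le_sum fun j _ => ces_term_le κ hκ (lam j) (hlam j) hs ht hst
  · rintro ⟨j0, hj0⟩ s hs t ht hst
    refine Finset.sum_lt_sum (fun j _ => ces_term_le κ hκ (lam j) (hlam j) hs ht hst.le)
      ⟨j0, Finset.mem_univ _, ces_term_lt κ hκ (lam j0) (hlam j0) hj0 hs ht hst⟩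
end

section
/- Let s ∈ (0, 1) and let a, b > 0 with a + b ≤ 1. Then (a + b)·(1 - s)/(1 - (a + b)·s) > a·(1 - s)/(1 - a·s) + b·(1 - s)/(1 - b·s). Consequently, splitting one product's share λ·s into two products with shares a·s and b·s (a + b = λ) strictly decreases the sum Σ_j λ_j·(1 - s)/(1 - λ_j·s), so the within-firm scaling factor is decreasing in the number of products. -/
/-- Splitting a product's share strictly decreases the MNL within-firm
scaling factor term: for s ∈ (0,1) and a, b > 0 with a + b ≤ 1,
(a+b)(1-s)/(1-(a+b)s) > a(1-s)/(1-as) + b(1-s)/(1-bs). -/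
theorem rho2_MNL_decreasing_in_number_of_products (s a b : ℝ)
    (hs0 : 0 < s) (hs1 : s < 1) (ha : 0 < a) (hb : 0 < b) (hab : a + b ≤ 1) :
    (a + b) * (1 - s) / (1 - (a + b) * s) >
      a * (1 - s) / (1 - a * s) + b * (1 - s) / (1 - b * s) := by

  have h1 : 0 < 1 - (a + b) * s := by nlinarith
  have h2 : 0 < 1 - a * s := by nlinarith
  have h3 : 0 < 1 - b * s := by nlinarith
  rw [gt_iff_lt, div_add_div _ _ (ne_of_gt h2) (ne_of_gt h3), div_lt_div_iff₀ (by positivity) h1]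
  nlinarith [mul_pos (mul_pos (mul_pos ha hb) hs0) (mul_pos (sub_pos.mpr hs1) (by nlinarith : (0:ℝ) < 2 - (a + b) * s))]
end

section
/- Let κ > 1, s ∈ (0, 1), and a, b > 0 with a + b ≤ 1. Then (a + b)·(κ - s)/(κ - (a + b)·s) > a·(κ - s)/(κ - a·s) + b·(κ - s)/(κ - b·s). Consequently, splitting one product's revenue share λ·s into two products with revenue shares a·s and b·s (a + b = λ) strictly decreases the sum Σ_j λ_j·(κ - s)/(κ - λ_j·s), so the within-firm scaling factor is decreasing in the number of products. -/
/-- Splitting a product's revenue share strictly decreases the CES within-firm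
scaling factor term: for κ > 1, s ∈ (0,1), and a, b > 0 with a + b ≤ 1,
(a+b)(κ-s)/(κ-(a+b)s) > a(κ-s)/(κ-as) + b(κ-s)/(κ-bs). -/
theorem rho2_CES_decreasing_in_number_of_products (κ s a b : ℝ) (hκ : 1 < κ)
    (hs0 : 0 < s) (hs1 : s < 1) (ha : 0 < a) (hb : 0 < b) (hab : a + b ≤ 1) :
    (a + b) * (κ - s) / (κ - (a + b) * s) >
      a * (κ - s) / (κ - a * s) + b * (κ - s) / (κ - b * s) := by
  have hκs : 0 < κ - s := by linarith
  have hda : 0 < κ - a * s := by nlinarith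
  have hdb : 0 < κ - b * s := by nlinarith
  have hdab : 0 < κ - (a + b) * s := by nlinarith
  rw [gt_iff_lt, div_add_div _ _ (ne_of_gt hda) (ne_of_gt hdb),
    div_lt_div_iff₀ (by positivity) hdab]
  nlinarith [mul_pos ha hb, mul_pos hs0 hs0, mul_pos (mul_pos ha hb) hs0,
    mul_pos (mul_pos (mul_pos ha hb) hs0) hs0, mul_pos hκs hs0,
    mul_pos (mul_pos ha hb) (mul_pos hκs hs0)]
end
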